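/- Let x and y be opposite points of a thick generalized quadrangle. If x is projective and y is regular, then y is projective. -/

import Mathlib

/-- A (thick) generalized quadrangle. -/
structure GenQuadrangle where
  P : Type
  Ln : Type
  inc : P → Ln → Prop
  /-- (PL): no pair of distinct points is incident with a pair of distinct lines -/
  pl : ∀ ⦃x y : P⦄ ⦃l m : Ln⦄, inc x l → inc y l → inc x m → inc y m → x = y ∨ l = m
  /-- thickness: every point is incident with at least three lines -/
  thickPt : ∀ x : P, ∃ l₁ l₂ l₃ : Ln, l₁ ≠ l₂ ∧ l₁ ≠ l₃ ∧ l₂ ≠ l₃ ∧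
    inc x l₁ ∧ inc x l₂ ∧ inc x l₃
  /-- thickness: every line is incident with at least three points -/
  thickLn : ∀ l : Ln, ∃ x₁ x₂ x₃ : P, x₁ ≠ x₂ ∧ x₁ ≠ x₃ ∧ x₂ ≠ x₃ ∧
    inc x₁ l ∧ inc x₂ l ∧ inc x₃ l
  /-- (GQ): for every non-incident point-line pair (x,l) there are a unique point y
  and a unique line m with x I m I y I l -/
  gq : ∀ (x : P) (l : Ln), ¬ inc x l → ∃! q : P × Ln, inc x q.2 ∧ inc q.1 q.2 ∧ inc q.1 l

namespace GenQuadrangle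

variable (G : GenQuadrangle)

/-- Two points are collinear if some line is incident with both. -/
def collinear (x y : G.P) : Prop := ∃ l : G.Ln, G.inc x l ∧ G.inc y l

/-- Two points are opposite if they are not collinear. -/
def opp (x y : G.P) : Prop := ¬ G.collinear x y

/-- The perp {x,y}^⊥ of a pair of points. -/
def perp (x y : G.P) : Set G.P := {z | G.collinear z x ∧ G.collinear z y}

/-- X^⊥ for a set of points X. -/
def perpSet (S : Set G.P) : Set G.P := {z | ∀ u ∈ S, G.collinear z u}

/-- The span {x,y}^⊥⊥ of a pair of points. -/
def span (x y : G.P) : Set G.P := G.perpSet (G.perp x y)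

/-- A point x is regular if every span {x,y}^⊥⊥ (y opposite x) is a perp of a pair
of opposite points. -/
def regular (x : G.P) : Prop :=
  ∀ y : G.P, G.opp x y → ∃ u v : G.P, G.opp u v ∧ G.span x y = G.perp u v

/-- A point x is projective if it is regular and every pair of distinct perps
through x meets in a unique point (i.e. the dual net Γ*_x is a dual affine plane). -/
def projective (x : G.P) : Prop :=
  G.regular x ∧ ∀ y z : G.P, G.opp x y → G.opp x z → G.perp x y ≠ G.perp x z →
    ∃! w : G.P, w ∈ G.perp x y ∧ w ∈ G.perp x z

/-- A triad: three pairwise opposite points. -/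
def triad (x y z : G.P) : Prop := G.opp x y ∧ G.opp y z ∧ G.opp x z

/-- A center of a triad: a point collinear with all three. -/
def center (w x y z : G.P) : Prop := G.collinear w x ∧ G.collinear w y ∧ G.collinear w z

end GenQuadrangle

/-!
Regularity of `y` lets us replace a point `w` opposite `y` by a point `w'` collinear with `x`
having the same perp with `y`: the span `{y,w}^⊥⊥` is a perp `{a,b}^⊥`, and projectivity of `x`
provides a point of `{a,b}^⊥` collinear with `x`. So it suffices to intersect `{y,z}^⊥` and
`{y,w}^⊥` for distinct `z, w ∈ x^⊥`. If `z` and `w` are collinear, the common points lie on the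
line `zw`. Otherwise `x` and a second point `v` of `{z,w}^⊥` give a perp `{x,v}^⊥ ∋ z, w`; the
point of `{x,y}^⊥ ∩ {x,v}^⊥` yields a line through `y` meeting the span `{x,v}^⊥⊥`, hence a common
point, and two common points `p, q` would have `{x,p}^⊥ = {x,q}^⊥`, forcing `p` and `q` to be
collinear.
-/

namespace GenQuadrangle

variable {G : GenQuadrangle}

lemma collinear.symm {p q : G.P} (h : G.collinear p q) : G.collinear q p := by
  obtain ⟨l, hp, hq⟩ := h
  exact ⟨l, hq, hp⟩

lemma collinear_refl (p : G.P) : G.collinear p p := by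
  obtain ⟨l, -, -, -, -, -, hl, -, -⟩ := G.thickPt p
  exact ⟨l, hl, hl⟩

lemma perp_comm (a b : G.P) : G.perp a b = G.perp b a :=
  Set.ext fun _ => and_comm

lemma exists_inc_collinear {p : G.P} {l : G.Ln} (hpl : ¬ G.inc p l) :
    ∃ q, G.inc q l ∧ G.collinear p q := by
  obtain ⟨⟨q, m⟩, ⟨hpm, hqm, hql⟩, -⟩ := G.gq p l hpl
  exact ⟨q, hql, m, hpm, hqm⟩

lemma eq_of_inc_collinear {p q₁ q₂ : G.P} {l : G.Ln} (hpl : ¬ G.inc p l)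
    (h₁ : G.inc q₁ l) (h₂ : G.inc q₂ l) (hpq₁ : G.collinear p q₁) (hpq₂ : G.collinear p q₂) :
    q₁ = q₂ := by
  obtain ⟨m₁, hpm₁, hqm₁⟩ := hpq₁
  obtain ⟨m₂, hpm₂, hqm₂⟩ := hpq₂
  obtain ⟨_, -, huniq⟩ := G.gq p l hpl
  exact congrArg Prod.fst
    ((huniq (q₁, m₁) ⟨hpm₁, hqm₁, h₁⟩).trans (huniq (q₂, m₂) ⟨hpm₂, hqm₂, h₂⟩).symm)

lemma inc_of_collinear_of_collinear {p z w : G.P} {m : G.Ln} (hzw : z ≠ w)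
    (hz : G.inc z m) (hw : G.inc w m) (hpz : G.collinear p z) (hpw : G.collinear p w) :
    G.inc p m := by
  by_contra hpm
  exact hzw (eq_of_inc_collinear hpm hz hw hpz hpw)

lemma opp_of_mem_perp {a b u v : G.P} (hab : G.opp a b)
    (hu : u ∈ G.perp a b) (hv : v ∈ G.perp a b) (huv : u ≠ v) : G.opp u v := by
  rintro ⟨m, hum, hvm⟩
  exact hab ⟨m, inc_of_collinear_of_collinear huv hum hvm hu.1.symm hv.1.symm,
    inc_of_collinear_of_collinear huv hum hvm hu.2.symm hv.2.symm⟩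

lemma exists_ne_mem_perp {a b : G.P} (hab : G.opp a b) (c : G.P) :
    ∃ u ∈ G.perp a b, u ≠ c := by
  obtain ⟨l₁, l₂, -, hl₁₂, -, -, hal₁, hal₂, -⟩ := G.thickPt a
  obtain ⟨u₁, hul₁, hbu₁⟩ := exists_inc_collinear fun h => hab ⟨l₁, hal₁, h⟩
  obtain ⟨u₂, hul₂, hbu₂⟩ := exists_inc_collinear fun h => hab ⟨l₂, hal₂, h⟩
  have hu₁ : u₁ ∈ G.perp a b := ⟨⟨l₁, hul₁, hal₁⟩, hbu₁.symm⟩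
  have hu₂ : u₂ ∈ G.perp a b := ⟨⟨l₂, hul₂, hal₂⟩, hbu₂.symm⟩
  have hu₁₂ : u₁ ≠ u₂ := by
    rintro rfl
    rcases G.pl hul₁ hal₁ hul₂ hal₂ with rfl | h
    · exact hab hbu₁.symm
    · exact hl₁₂ h
  by_cases hc : u₁ = c
  · exact ⟨u₂, hu₂, fun h => hu₁₂ (hc.trans h.symm)⟩
  · exact ⟨u₁, hu₁, hc⟩

lemma perp_eq_of_subset {y z z' : G.P} (hz : G.opp y z) (hz' : G.opp y z')
    (hsub : G.perp y z ⊆ G.perp y z') : G.perp y z = G.perp y z' := by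
  refine hsub.antisymm fun u ⟨⟨L, huL, hyL⟩, huz'⟩ => ?_
  obtain ⟨p, hpL, hzp⟩ := exists_inc_collinear fun h => hz ⟨L, hyL, h⟩
  have hp : p ∈ G.perp y z := ⟨⟨L, hpL, hyL⟩, hzp.symm⟩
  have hz'L : ¬ G.inc z' L := fun h => hz' ⟨L, hyL, h⟩
  rwa [← eq_of_inc_collinear hz'L hpL huL (hsub hp).2.symm huz'.symm]

lemma collinear_of_perp_subset {x y p q : G.P} (hxy : G.opp x y)
    (hpy : G.collinear p y) (hqy : G.collinear q y) (hsub : G.perp x q ⊆ G.perp x p) :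
    G.collinear p q := by
  obtain ⟨N, hqN, hyN⟩ := hqy
  obtain ⟨t, htN, hxt⟩ := exists_inc_collinear fun h => hxy ⟨N, h, hyN⟩
  have htp : G.collinear t p := (hsub ⟨hxt.symm, N, htN, hqN⟩).2
  have hty : t ≠ y := fun h => hxy (h ▸ hxt)
  exact ⟨N, inc_of_collinear_of_collinear hty htN hyN htp.symm hpy, hqN⟩

lemma exists_mem_perp_inter_of_collinear {y z w : G.P} (hyz : G.opp y z)
    (hzw : G.collinear z w) : ∃ u, u ∈ G.perp y z ∧ u ∈ G.perp y w := by
  obtain ⟨m, hzm, hwm⟩ := hzw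
  obtain ⟨u, hum, hyu⟩ := exists_inc_collinear fun h => hyz ⟨m, h, hzm⟩
  exact ⟨u, ⟨hyu.symm, m, hum, hzm⟩, ⟨hyu.symm, m, hum, hwm⟩⟩

lemma exists_mem_perp_collinear_of_collinear {x a b : G.P} (hxa : G.collinear x a)
    (hxb : G.opp x b) : ∃ u ∈ G.perp a b, G.collinear u x := by
  obtain ⟨m, hxm, ham⟩ := hxa
  obtain ⟨u, hum, hbu⟩ := exists_inc_collinear fun h => hxb ⟨m, hxm, h⟩
  exact ⟨u, ⟨⟨m, hum, ham⟩, hbu.symm⟩, m, hum, hxm⟩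

namespace projective

variable {x : G.P} (hx : G.projective x)
include hx

lemma perp_eq_of_two_mem {p q c d : G.P} (hp : G.opp x p) (hq : G.opp x q) (hcd : c ≠ d)
    (hcp : c ∈ G.perp x p) (hcq : c ∈ G.perp x q) (hdp : d ∈ G.perp x p)
    (hdq : d ∈ G.perp x q) : G.perp x p = G.perp x q := by
  by_contra hne
  obtain ⟨_, -, huniq⟩ := hx.2 p q hp hq hne
  exact hcd ((huniq c ⟨hcp, hcq⟩).trans (huniq d ⟨hdp, hdq⟩).symm)

lemma exists_mem_perp_inter {a b : G.P} (ha : G.opp x a) (hb : G.opp x b) :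
    ∃ u, u ∈ G.perp x a ∧ u ∈ G.perp x b := by
  by_cases heq : G.perp x a = G.perp x b
  · obtain ⟨u, hu, -⟩ := exists_ne_mem_perp ha x
    exact ⟨u, hu, heq ▸ hu⟩
  · exact (hx.2 a b ha hb heq).exists

lemma exists_inc_mem_span {v g : G.P} {L : G.Ln} (hxv : G.opp x v)
    (hg : g ∈ G.perp x v) (hgL : G.inc g L) (hxL : ¬ G.inc x L) :
    ∃ u, G.inc u L ∧ u ∈ G.span x v := by
  -- The projection `u` of a second point `c` of `{x,v}^⊥` onto `L` has `c, g ∈ {x,u}^⊥`,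
  -- so `{x,u}^⊥ = {x,v}^⊥`.
  obtain ⟨c, hc, hcg⟩ := exists_ne_mem_perp hxv g
  have hcg' : G.opp c g := opp_of_mem_perp hxv hc hg hcg
  obtain ⟨u, huL, hcu⟩ := exists_inc_collinear fun h => hcg' ⟨L, h, hgL⟩
  have hxu : G.opp x u := fun h =>
    hcg' (eq_of_inc_collinear hxL huL hgL h hg.1.symm ▸ hcu)
  have heq : G.perp x u = G.perp x v :=
    hx.perp_eq_of_two_mem hxu hxv hcg ⟨hc.1, hcu⟩ hc ⟨hg.1, L, hgL, huL⟩ hg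
  exact ⟨u, huL, fun s hs => (heq ▸ hs : s ∈ G.perp x u).2.symm⟩

lemma exists_mem_perp_collinear (a b : G.P) : ∃ u ∈ G.perp a b, G.collinear u x := by
  by_cases hxa : G.collinear x a <;> by_cases hxb : G.collinear x b
  · exact ⟨x, ⟨hxa, hxb⟩, collinear_refl x⟩
  · exact exists_mem_perp_collinear_of_collinear hxa hxb
  · rw [perp_comm]
    exact exists_mem_perp_collinear_of_collinear hxb hxa
  · obtain ⟨u, hua, hub⟩ := hx.exists_mem_perp_inter hxa hxb
    exact ⟨u, ⟨hua.2, hub.2⟩, hua.1⟩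

lemma exists_collinear_opp_perp_eq {y w : G.P} (hy : G.regular y) (hxy : G.opp x y)
    (hw : G.opp y w) : ∃ w', G.collinear w' x ∧ G.opp y w' ∧ G.perp y w' = G.perp y w := by
  obtain ⟨a, b, hab, hspan⟩ := hy w hw
  obtain ⟨w', hw'ab, hw'x⟩ := hx.exists_mem_perp_collinear a b
  have hyab : y ∈ G.perp a b := hspan ▸ fun u hu => hu.1.symm
  have hyw' : y ≠ w' := fun h => hxy (h ▸ hw'x).symm
  have hoyw' : G.opp y w' := opp_of_mem_perp hab hyab hw'ab hyw'
  have hsub : G.perp y w ⊆ G.perp y w' := fun u hu =>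
    ⟨hu.1, ((hspan.symm ▸ hw'ab : w' ∈ G.span y w) u hu).symm⟩
  exact ⟨w', hw'x, hoyw', (perp_eq_of_subset hw hoyw' hsub).symm⟩

lemma exists_mem_perp_inter_of_opp {y z w : G.P} (hxy : G.opp x y)
    (hzx : G.collinear z x) (hwx : G.collinear w x) (hyz : G.opp y z) (hzw : G.opp z w) :
    ∃ u, u ∈ G.perp y z ∧ u ∈ G.perp y w := by
  have hxzw : x ∈ G.perp z w := ⟨hzx.symm, hwx.symm⟩
  obtain ⟨v, hv, hvx⟩ := exists_ne_mem_perp hzw x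
  have hxv : G.opp x v := opp_of_mem_perp hzw hxzw hv hvx.symm
  have hzv : z ∈ G.perp x v := ⟨hzx, hv.1.symm⟩
  have hwv : w ∈ G.perp x v := ⟨hwx, hv.2.symm⟩
  have hne : G.perp x y ≠ G.perp x v := fun h => hyz (h ▸ hzv : z ∈ G.perp x y).2.symm
  obtain ⟨g, ⟨hgy, hgv⟩, -⟩ := hx.2 y v hxy hxv hne
  obtain ⟨L, hgL, hyL⟩ := hgy.2
  obtain ⟨u, huL, hu⟩ := hx.exists_inc_mem_span hxv hgv hgL fun h => hxy ⟨L, h, hyL⟩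
  exact ⟨u, ⟨⟨L, huL, hyL⟩, hu z hzv⟩, ⟨⟨L, huL, hyL⟩, hu w hwv⟩⟩

lemma exists_mem_perp_inter_of_collinear_collinear {y z w : G.P} (hxy : G.opp x y)
    (hzx : G.collinear z x) (hwx : G.collinear w x) (hyz : G.opp y z) :
    ∃ u, u ∈ G.perp y z ∧ u ∈ G.perp y w := by
  by_cases hzw : G.collinear z w
  · exact exists_mem_perp_inter_of_collinear hyz hzw
  · exact hx.exists_mem_perp_inter_of_opp hxy hzx hwx hyz hzw

lemma eq_of_mem_perp_inter {y z w p q : G.P} (hxy : G.opp x y)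
    (hzx : G.collinear z x) (hwx : G.collinear w x) (hyz : G.opp y z) (hzw : z ≠ w)
    (hp : p ∈ G.perp y z ∧ p ∈ G.perp y w) (hq : q ∈ G.perp y z ∧ q ∈ G.perp y w) :
    p = q := by
  by_contra hpq
  refine opp_of_mem_perp hyz hp.1 hq.1 hpq ?_
  by_cases hzw' : G.collinear z w
  · obtain ⟨m, hzm, hwm⟩ := hzw'
    exact ⟨m, inc_of_collinear_of_collinear hzw hzm hwm hp.1.2 hp.2.2,
      inc_of_collinear_of_collinear hzw hzm hwm hq.1.2 hq.2.2⟩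
  · have hxzw : x ∈ G.perp z w := ⟨hzx.symm, hwx.symm⟩
    have hxp : G.opp x p := opp_of_mem_perp hzw' hxzw ⟨hp.1.2, hp.2.2⟩
      (by rintro rfl; exact hxy hp.1.1)
    have hxq : G.opp x q := opp_of_mem_perp hzw' hxzw ⟨hq.1.2, hq.2.2⟩
      (by rintro rfl; exact hxy hq.1.1)
    have heq : G.perp x p = G.perp x q := hx.perp_eq_of_two_mem hxp hxq hzw
      ⟨hzx, hp.1.2.symm⟩ ⟨hzx, hq.1.2.symm⟩ ⟨hwx, hp.2.2.symm⟩ ⟨hwx, hq.2.2.symm⟩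
    exact collinear_of_perp_subset hxy hp.1.1 hq.1.1 heq.ge

end projective

end GenQuadrangle

/-- Let x and y be opposite points of a thick generalized quadrangle.
If x is projective and y is regular, then y is projective. -/
theorem projective_of_opp_projective_regular
    (G : GenQuadrangle) (x y : G.P) (hopp : G.opp x y)
    (hx : G.projective x) (hy : G.regular y) :
    G.projective y := by
  refine ⟨hy, fun z w hz hw hne => ?_⟩
  obtain ⟨z', hz'x, hyz', hz'z⟩ := hx.exists_collinear_opp_perp_eq hy hopp hz
  obtain ⟨w', hw'x, -, hw'w⟩ := hx.exists_collinear_opp_perp_eq hy hopp hw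
  rw [← hz'z, ← hw'w] at hne ⊢
  obtain ⟨u, hu⟩ := hx.exists_mem_perp_inter_of_collinear_collinear hopp hz'x hw'x hyz'
  have hz'w' : z' ≠ w' := by rintro rfl; exact hne rfl
  exact ⟨u, hu, fun r hr => hx.eq_of_mem_perp_inter hopp hz'x hw'x hyz' hz'w' hr hu⟩
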